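/- arXiv:1912.12873 — 2 statements merged into one kernel-verified Lean document; each statement's English description precedes it below -/
import Mathlib

section
/- Let G be a finite two-player zero-sum game with perfect information given by a finite game tree, and let f be a (behavioral) mixed-strategy subgame-perfect equilibrium. Then any pure strategy profile g such that, at every internal node h, the action g(h) lies in the support of the mixed action f(h), is itself a pure-strategy subgame-perfect equilibrium, and it yields the same payoff as f at every node. -/
set_option linter.unusedVariables false

/-- A finite game tree with `n` players: each internal node is controlled by a
player in `Fin n` and has `k+1` children; leaves carry a payoff vector. -/
inductive GameTree (n : ℕ) : Type
  | leaf (u : Fin n → ℝ) : GameTree n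
  | node (p : Fin n) (k : ℕ) (c : Fin (k + 1) → GameTree n) : GameTree n

/-- A pure strategy profile: a choice of child at every internal node. -/
inductive PureProfile {n : ℕ} : GameTree n → Type
  | leaf {u : Fin n → ℝ} : PureProfile (.leaf u)
  | node {p : Fin n} {k : ℕ} {c : Fin (k + 1) → GameTree n}
      (ch : Fin (k + 1)) (sub : ∀ j, PureProfile (c j)) :
      PureProfile (.node p k c)

/-- The payoff vector induced by a pure strategy profile. -/
def payoff {n : ℕ} : {t : GameTree n} → PureProfile t → Fin n → ℝ
  | .leaf u, .leaf, i => u i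
  | .node _ _ _, .node ch sub, i => payoff (sub ch) i

/-- `Dev i g g'` : `g'` is a unilateral deviation of `g` by player `i`
(they agree at every node not controlled by `i`). -/
def Dev {n : ℕ} (i : Fin n) : {t : GameTree n} → PureProfile t → PureProfile t → Prop
  | .leaf _, _, _ => True
  | .node p _ _, .node ch sub, .node ch' sub' =>
      (p ≠ i → ch' = ch) ∧ ∀ j, Dev i (sub j) (sub' j)

/-- Subgame-perfect equilibrium for pure profiles: at every node, no player can
strictly improve her payoff in the subgame rooted there by a unilateral deviation. -/
def IsSPE {n : ℕ} : {t : GameTree n} → PureProfile t → Prop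
  | .leaf _, _ => True
  | .node p k c, .node ch sub =>
      (∀ j, IsSPE (sub j)) ∧
      ∀ (i : Fin n) (g' : PureProfile (.node p k c)),
        Dev i (.node ch sub) g' →
        payoff g' i ≤ payoff (PureProfile.node (p := p) ch sub) i

/-- A behavioral mixed strategy profile: a probability distribution over
children at every internal node. -/
inductive MixedProfile {n : ℕ} : GameTree n → Type
  | leaf {u : Fin n → ℝ} : MixedProfile (.leaf u)
  | node {p : Fin n} {k : ℕ} {c : Fin (k + 1) → GameTree n}
      (w : Fin (k + 1) → ℝ) (hw : ∀ j, 0 ≤ w j) (hsum : ∑ j, w j = 1)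
      (sub : ∀ j, MixedProfile (c j)) :
      MixedProfile (.node p k c)

/-- Expected payoff vector of a behavioral mixed strategy profile. -/
noncomputable def mpayoff {n : ℕ} : {t : GameTree n} → MixedProfile t → Fin n → ℝ
  | .leaf u, .leaf, i => u i
  | .node _ _ _, .node w _ _ sub, i => ∑ j, w j * mpayoff (sub j) i

/-- `MDev i f f'` : `f'` is a unilateral deviation of the mixed profile `f` by player `i`. -/
def MDev {n : ℕ} (i : Fin n) : {t : GameTree n} → MixedProfile t → MixedProfile t → Prop
  | .leaf _, _, _ => True
  | .node p _ _, .node w _ _ sub, .node w' _ _ sub' =>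
      (p ≠ i → w' = w) ∧ ∀ j, MDev i (sub j) (sub' j)

/-- Subgame-perfect equilibrium for behavioral mixed profiles. -/
noncomputable def MixedSPE {n : ℕ} : {t : GameTree n} → MixedProfile t → Prop
  | .leaf _, _ => True
  | .node p k c, .node w hw hs sub =>
      (∀ j, MixedSPE (sub j)) ∧
      ∀ (i : Fin n) (f' : MixedProfile (.node p k c)),
        MDev i (MixedProfile.node (p := p) w hw hs sub) f' →
        mpayoff f' i ≤ mpayoff (MixedProfile.node (p := p) w hw hs sub) i

/-- `InSupport f g` : at every internal node, the pure profile `g` selects an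
action lying in the support of the mixed action of `f` at that node. -/
def InSupport {n : ℕ} : {t : GameTree n} → MixedProfile t → PureProfile t → Prop
  | .leaf _, _, _ => True
  | .node _ _ _, .node w _ _ msub, .node ch psub =>
      0 < w ch ∧ ∀ j, InSupport (msub j) (psub j)

/-- The payoffs of leaves of the game tree. -/
def IsLeafPayoff {n : ℕ} : GameTree n → (Fin n → ℝ) → Prop
  | .leaf u, v => u = v
  | .node _ _ c, v => ∃ j, IsLeafPayoff (c j) v

/-- Zero-sum condition for two-player games: at every leaf the two payoffs sum to zero. -/
def ZeroSum (t : GameTree 2) : Prop :=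
  ∀ v, IsLeafPayoff t v → v 0 + v 1 = 0

/-- `PayoffAgree f g` : at every node of the tree, the pure profile `g`
yields the same payoff vector as the mixed profile `f`. -/
def PayoffAgree {n : ℕ} : {t : GameTree n} → MixedProfile t → PureProfile t → Prop
  | .leaf _, _, _ => True
  | .node p k c, .node w hw hs msub, .node ch psub =>
      (∀ i, payoff (PureProfile.node (p := p) ch psub) i
          = mpayoff (MixedProfile.node (p := p) w hw hs msub) i) ∧
      ∀ j, PayoffAgree (msub j) (psub j)

/-!
In a subgame-perfect mixed equilibrium, the controller of a node cannot gain by switching to a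
pure action there, so every child is worth at most the node's value to her. The value is the
average of the children's values under her mixed action, hence every action in its support is
worth exactly the node's value to her; in a two-player zero-sum game this pins down the other
player's payoff as well. By induction on the tree, a pure selection from the supports then has
the same payoffs as the mixed profile at every node, and a pure unilateral deviation at a node is
no better than the best action there, which is an action of the support.
-/

open Finset

theorem eq_of_le_weighted_sum_of_pos {ι : Type*} [Fintype ι] {w x : ι → ℝ} {a : ℝ}
    (hw : ∀ j, 0 ≤ w j) (hsum : ∑ j, w j = 1) (hle : ∀ j, x j ≤ a)
    (ha : ∑ j, w j * x j = a) {i : ι} (hi : 0 < w i) : x i = a := by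
  have hterms : ∑ j, w j * x j = ∑ j, w j * a := by
    rw [← sum_mul, hsum, one_mul, ha]
  have hi_eq : w i * x i = w i * a :=
    (sum_eq_sum_iff_of_le fun j _ => mul_le_mul_of_nonneg_left (hle j) (hw j)).1
      hterms i (mem_univ i)
  exact mul_left_cancel₀ hi.ne' hi_eq

theorem ZeroSum.child {p : Fin 2} {k : ℕ} {c : Fin (k + 1) → GameTree 2}
    (hz : ZeroSum (.node p k c)) (j : Fin (k + 1)) : ZeroSum (c j) :=
  fun v hv => hz v ⟨j, hv⟩

theorem mpayoff_zero_add_mpayoff_one : ∀ {t : GameTree 2}, ZeroSum t →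
    ∀ f : MixedProfile t, mpayoff f 0 + mpayoff f 1 = 0
  | .leaf u, hz, .leaf => hz u rfl
  | .node _ _ _, hz, .node w _ _ sub => by
    simp only [mpayoff, ← sum_add_distrib, ← mul_add,
      mpayoff_zero_add_mpayoff_one (hz.child _), mul_zero, sum_const_zero]

theorem eq_of_add_eq_zero_of_apply_eq {v v' : Fin 2 → ℝ} (hv : v 0 + v 1 = 0)
    (hv' : v' 0 + v' 1 = 0) {p : Fin 2} (hp : v p = v' p) : v = v' := by
  funext i
  fin_cases p <;> fin_cases i <;> simp_all <;> linarith

theorem MDev.refl {n : ℕ} (i : Fin n) : ∀ {t : GameTree n} (f : MixedProfile t), MDev i f f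
  | .leaf _, .leaf => trivial
  | .node _ _ _, .node _ _ _ sub => ⟨fun _ => rfl, fun j => MDev.refl i (sub j)⟩

theorem IsSPE.payoff_le_of_dev {n : ℕ} {i : Fin n} :
    ∀ {t : GameTree n} {g g' : PureProfile t}, IsSPE g → Dev i g g' →
      payoff g' i ≤ payoff g i
  | .leaf _, .leaf, .leaf, _, _ => le_rfl
  | .node _ _ _, .node _ _, g', h, hd => h.2 i g' hd

theorem PayoffAgree.payoff_eq {n : ℕ} :
    ∀ {t : GameTree n} {f : MixedProfile t} {g : PureProfile t}, PayoffAgree f g →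
      payoff g = mpayoff f
  | .leaf _, .leaf, .leaf, _ => rfl
  | .node _ _ _, .node _ _ _ _, .node _ _, h => funext h.1

section Node

variable {n : ℕ} {p : Fin n} {k : ℕ} {c : Fin (k + 1) → GameTree n}

theorem MixedSPE.mpayoff_child_le {w : Fin (k + 1) → ℝ} {hw : ∀ j, 0 ≤ w j}
    {hs : ∑ j, w j = 1} {sub : ∀ j, MixedProfile (c j)}
    (hf : MixedSPE (MixedProfile.node (p := p) w hw hs sub)) (j : Fin (k + 1)) :
    mpayoff (sub j) p ≤ mpayoff (MixedProfile.node (p := p) w hw hs sub) p := by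
  have hdev : MDev p (MixedProfile.node (p := p) w hw hs sub)
      (MixedProfile.node (p := p) (Pi.single j 1)
        (fun _ => by rw [Pi.single_apply]; positivity)
        (Fintype.sum_pi_single' j 1) sub) :=
    ⟨fun h => absurd rfl h, fun j' => MDev.refl p (sub j')⟩
  simpa [mpayoff, Pi.single_apply] using hf.2 p _ hdev

theorem MixedSPE.mpayoff_child_eq_of_pos {w : Fin (k + 1) → ℝ} {hw : ∀ j, 0 ≤ w j}
    {hs : ∑ j, w j = 1} {sub : ∀ j, MixedProfile (c j)}
    (hf : MixedSPE (MixedProfile.node (p := p) w hw hs sub)) {j : Fin (k + 1)} (hj : 0 < w j) :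
    mpayoff (sub j) p = mpayoff (MixedProfile.node (p := p) w hw hs sub) p :=
  eq_of_le_weighted_sum_of_pos hw hs hf.mpayoff_child_le rfl hj

/-- One-shot deviation principle at the root. -/
theorem isSPE_node {ch : Fin (k + 1)} {sub : ∀ j, PureProfile (c j)} (hsub : ∀ j, IsSPE (sub j))
    (hbest : ∀ j, payoff (sub j) p ≤ payoff (sub ch) p) :
    IsSPE (PureProfile.node (p := p) ch sub) := by
  refine ⟨hsub, fun i g' hd => ?_⟩
  cases g' with
  | node ch' sub' =>
    obtain ⟨hd_root, hd_sub⟩ := hd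
    have hle : payoff (sub' ch') i ≤ payoff (sub ch') i :=
      (hsub ch').payoff_le_of_dev (hd_sub ch')
    by_cases hpi : p = i
    · subst hpi
      exact hle.trans (hbest ch')
    · rw [hd_root hpi] at hle ⊢
      exact hle

end Node

theorem stmt2 (t : GameTree 2) (hz : ZeroSum t)
    (f : MixedProfile t) (hf : MixedSPE f)
    (g : PureProfile t) (hg : InSupport f g) :
    IsSPE g ∧ PayoffAgree f g := by
  induction t with
  | leaf u =>
    cases f; cases g
    exact ⟨trivial, trivial⟩
  | node p k c ih =>
    cases f with | node w hw hs msub =>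
    cases g with | node ch psub =>
    have ih' j := ih j (hz.child j) (msub j) (hf.1 j) (psub j) (hg.2 j)
    have hpayoff j : payoff (psub j) = mpayoff (msub j) := (ih' j).2.payoff_eq
    have hroot : payoff (psub ch) = mpayoff (MixedProfile.node (p := p) w hw hs msub) := by
      rw [hpayoff]
      exact eq_of_add_eq_zero_of_apply_eq (mpayoff_zero_add_mpayoff_one (hz.child ch) _)
        (mpayoff_zero_add_mpayoff_one hz _) (hf.mpayoff_child_eq_of_pos hg.1)
    refine ⟨isSPE_node (fun j => (ih' j).1) fun j => ?_, congrFun hroot, fun j => (ih' j).2⟩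
    rw [hroot, hpayoff]
    exact hf.mpayoff_child_le j
end

section
/- There exists a finite three-player fixed-sum perfect-information game and a mixed-strategy subgame-perfect equilibrium f of it such that no pure strategy profile selecting actions in the supports of f is a pure-strategy subgame-perfect equilibrium; concretely, in the game G5 of the paper, the profile f = (L1; 0.5 L2 + 0.5 R2; 0.5 L3 + 0.5 R3) is a mixed SPE but no pure selection from its supports is an SPE. -/
set_option linter.unusedVariables false

/-- Fixed-sum condition: at every leaf the payoffs sum to the constant `s`. -/
def FixedSum {n : ℕ} (t : GameTree n) (s : ℝ) : Prop :=
  ∀ v, IsLeafPayoff t v → ∑ i, v i = s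

noncomputable def G5 : GameTree 3 :=
  .node 0 1
    ![.node 1 1 ![.node 2 1 ![.leaf ![8, 0, 1], .leaf ![0, 8, 1]], .leaf ![2, 4, 3]],
      .leaf ![3, 3, 3]]

/-!
Under `f` the last two movers are indifferent (each of their actions yields them `1`, resp. `4`),
so no unilateral deviation inside the subgame after `L1` changes the deviator's expected payoff,
while player 1 gets `3` after both `L1` and `R1`; hence `f` is a subgame-perfect equilibrium.
In pure strategies, however, the subgame after `L1` has no equilibrium in which player 1 gets
more than `2`: if player 3 picks `L3`, player 2 leaves with `R2`, and otherwise player 1 gets `0`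
or `2`. So any pure selection from the supports, which must play `L1`, is beaten by `R1`.
-/

section FixedSum

variable {n : ℕ} {s : ℝ}

theorem fixedSum_leaf_iff (u : Fin n → ℝ) : FixedSum (.leaf u) s ↔ ∑ i, u i = s :=
  ⟨fun h => h u rfl, fun h _ hv => hv ▸ h⟩

theorem fixedSum_node_iff (p : Fin n) (k : ℕ) (c : Fin (k + 1) → GameTree n) :
    FixedSum (.node p k c) s ↔ ∀ j, FixedSum (c j) s :=
  ⟨fun h j v hv => h v ⟨j, hv⟩, fun h v ⟨j, hv⟩ => h j v hv⟩

end FixedSum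

section Pure

variable {n : ℕ}

@[simp]
theorem payoff_leaf (u : Fin n → ℝ) (g : PureProfile (.leaf u)) (i : Fin n) :
    payoff g i = u i := by
  cases g; rfl

@[simp]
theorem payoff_node {p : Fin n} {k : ℕ} {c : Fin (k + 1) → GameTree n} (ch : Fin (k + 1))
    (sub : ∀ j, PureProfile (c j)) (i : Fin n) :
    payoff (PureProfile.node (p := p) ch sub) i = payoff (sub ch) i :=
  rfl

theorem Dev.refl (i : Fin n) {t : GameTree n} (g : PureProfile t) : Dev i g g := by
  induction g with
  | leaf => trivial
  | node ch sub ih => exact ⟨fun _ => rfl, ih⟩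

theorem IsSPE.payoff_le_of_mover {p : Fin n} {k : ℕ} {c : Fin (k + 1) → GameTree n}
    {ch : Fin (k + 1)} {sub : ∀ j, PureProfile (c j)}
    (h : IsSPE (PureProfile.node (p := p) ch sub)) (j : Fin (k + 1)) :
    payoff (sub j) p ≤ payoff (sub ch) p :=
  h.2 p (.node j sub) ⟨fun hp => absurd rfl hp, fun j => Dev.refl p (sub j)⟩

end Pure

section Mixed

variable {n : ℕ}

@[simp]
theorem mpayoff_leaf (u : Fin n → ℝ) (f : MixedProfile (.leaf u)) (i : Fin n) :
    mpayoff f i = u i := by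
  cases f; rfl

@[simp]
theorem mpayoff_node {p : Fin n} {k : ℕ} {c : Fin (k + 1) → GameTree n} (w : Fin (k + 1) → ℝ)
    (hw : ∀ j, 0 ≤ w j) (hs : ∑ j, w j = 1) (sub : ∀ j, MixedProfile (c j)) (i : Fin n) :
    mpayoff (MixedProfile.node (p := p) w hw hs sub) i = ∑ j, w j * mpayoff (sub j) i :=
  rfl

def DevPayoffLE (i : Fin n) {t : GameTree n} (f : MixedProfile t) (b : ℝ) : Prop :=
  ∀ f', MDev i f f' → mpayoff f' i ≤ b

theorem devPayoffLE_leaf (i : Fin n) (u : Fin n → ℝ) :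
    DevPayoffLE i (MixedProfile.leaf (u := u)) (u i) := by
  intro f' _
  rw [mpayoff_leaf]

section Node

variable {p : Fin n} {k : ℕ} {c : Fin (k + 1) → GameTree n} {w : Fin (k + 1) → ℝ}
  {hw : ∀ j, 0 ≤ w j} {hs : ∑ j, w j = 1} {sub : ∀ j, MixedProfile (c j)}

theorem DevPayoffLE.node_of_ne {i : Fin n} (hi : p ≠ i)
    (h : ∀ j, DevPayoffLE i (sub j) (mpayoff (sub j) i)) :
    DevPayoffLE i (MixedProfile.node (p := p) w hw hs sub)
      (mpayoff (MixedProfile.node (p := p) w hw hs sub) i) := by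
  intro f' hf'
  cases f' with | node w' hw' hs' sub' =>
  obtain ⟨hw_eq, hsub⟩ := hf'
  obtain rfl := hw_eq hi
  exact Finset.sum_le_sum fun j _ => mul_le_mul_of_nonneg_left (h j _ (hsub j)) (hw j)

theorem DevPayoffLE.node {i : Fin n} {b : ℝ} (h : ∀ j, DevPayoffLE i (sub j) b) :
    DevPayoffLE i (MixedProfile.node (p := p) w hw hs sub) b := by
  intro f' hf'
  cases f' with | node w' hw' hs' sub' =>
  obtain ⟨-, hsub⟩ := hf'
  calc mpayoff (MixedProfile.node (p := p) w' hw' hs' sub') i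
      = ∑ j, w' j * mpayoff (sub' j) i := rfl
    _ ≤ ∑ j, w' j * b :=
      Finset.sum_le_sum fun j _ => mul_le_mul_of_nonneg_left (h j _ (hsub j)) (hw' j)
    _ = b := by rw [← Finset.sum_mul, hs', one_mul]

theorem MixedSPE.node (hsub : ∀ j, MixedSPE (sub j))
    (hdev : ∀ i, DevPayoffLE i (MixedProfile.node (p := p) w hw hs sub)
      (mpayoff (MixedProfile.node (p := p) w hw hs sub) i)) :
    MixedSPE (MixedProfile.node (p := p) w hw hs sub) :=
  ⟨hsub, hdev⟩

end Node

end Mixed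

namespace G5

/- Players are numbered from `1` as in the paper but indexed from `0` in `Fin 3`; `L` is child `0`.
`subgameₖ` is the subgame in which player `k` moves. -/

noncomputable def subgame₃ : GameTree 3 :=
  .node 2 1 ![.leaf ![8, 0, 1], .leaf ![0, 8, 1]]

noncomputable def subgame₂ : GameTree 3 :=
  .node 1 1 ![subgame₃, .leaf ![2, 4, 3]]

theorem uniform_nonneg : ∀ j : Fin 2, (0 : ℝ) ≤ ![1 / 2, 1 / 2] j := by
  intro j; fin_cases j <;> norm_num

theorem uniform_sum : ∑ j : Fin 2, ![(1 : ℝ) / 2, 1 / 2] j = 1 := by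
  norm_num [Fin.sum_univ_two]

theorem dirac_nonneg : ∀ j : Fin 2, (0 : ℝ) ≤ ![1, 0] j := by
  intro j; fin_cases j <;> norm_num

theorem dirac_sum : ∑ j : Fin 2, ![(1 : ℝ), 0] j = 1 := by
  norm_num [Fin.sum_univ_two]

noncomputable def f₃ : MixedProfile subgame₃ :=
  .node ![1 / 2, 1 / 2] uniform_nonneg uniform_sum fun
    | 0 => .leaf
    | 1 => .leaf

noncomputable def f₂ : MixedProfile subgame₂ :=
  .node ![1 / 2, 1 / 2] uniform_nonneg uniform_sum fun
    | 0 => f₃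
    | 1 => .leaf

/-- The paper's `f = (L1; ½ L2 + ½ R2; ½ L3 + ½ R3)`. -/
noncomputable def f : MixedProfile G5 :=
  .node ![1, 0] dirac_nonneg dirac_sum fun
    | 0 => f₂
    | 1 => .leaf

theorem mpayoff_f₃ : mpayoff f₃ = ![4, 4, 1] := by
  ext i; erw [mpayoff_node, Fin.sum_univ_two, mpayoff_leaf, mpayoff_leaf]
  fin_cases i <;> norm_num

theorem mpayoff_f₂ : mpayoff f₂ = ![3, 4, 2] := by
  ext i; erw [mpayoff_node, Fin.sum_univ_two, mpayoff_f₃, mpayoff_leaf]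
  fin_cases i <;> norm_num

theorem mpayoff_f : mpayoff f = ![3, 4, 2] := by
  ext i; erw [mpayoff_node, Fin.sum_univ_two, mpayoff_f₂, mpayoff_leaf]
  fin_cases i <;> norm_num

theorem devPayoffLE_f₃ (i : Fin 3) : DevPayoffLE i f₃ (mpayoff f₃ i) := by
  fin_cases i
  · exact DevPayoffLE.node_of_ne (by decide) fun j => by fin_cases j <;> exact devPayoffLE_leaf _ _
  · exact DevPayoffLE.node_of_ne (by decide) fun j => by fin_cases j <;> exact devPayoffLE_leaf _ _
  · rw [mpayoff_f₃]
    exact DevPayoffLE.node fun j => by fin_cases j <;> exact devPayoffLE_leaf _ _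

theorem devPayoffLE_f₂ (i : Fin 3) : DevPayoffLE i f₂ (mpayoff f₂ i) := by
  fin_cases i
  · exact DevPayoffLE.node_of_ne (by decide) fun j => by
      fin_cases j; exacts [devPayoffLE_f₃ 0, devPayoffLE_leaf _ _]
  · rw [mpayoff_f₂]
    refine DevPayoffLE.node fun j => ?_
    fin_cases j
    · have h := devPayoffLE_f₃ 1
      rwa [mpayoff_f₃] at h
    · exact devPayoffLE_leaf _ _
  · exact DevPayoffLE.node_of_ne (by decide) fun j => by
      fin_cases j; exacts [devPayoffLE_f₃ 2, devPayoffLE_leaf _ _]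

theorem devPayoffLE_f (i : Fin 3) : DevPayoffLE i f (mpayoff f i) := by
  fin_cases i
  · rw [mpayoff_f]
    refine DevPayoffLE.node fun j => ?_
    fin_cases j
    · have h := devPayoffLE_f₂ 0
      rwa [mpayoff_f₂] at h
    · exact devPayoffLE_leaf _ _
  · exact DevPayoffLE.node_of_ne (by decide) fun j => by
      fin_cases j; exacts [devPayoffLE_f₂ 1, devPayoffLE_leaf _ _]
  · exact DevPayoffLE.node_of_ne (by decide) fun j => by
      fin_cases j; exacts [devPayoffLE_f₂ 2, devPayoffLE_leaf _ _]

theorem mixedSPE_f₃ : MixedSPE f₃ :=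
  MixedSPE.node (fun j => by fin_cases j <;> trivial) devPayoffLE_f₃

theorem mixedSPE_f₂ : MixedSPE f₂ :=
  MixedSPE.node (fun j => by fin_cases j; exacts [mixedSPE_f₃, trivial]) devPayoffLE_f₂

theorem mixedSPE_f : MixedSPE f :=
  MixedSPE.node (fun j => by fin_cases j; exacts [mixedSPE_f₂, trivial]) devPayoffLE_f

theorem payoff_zero_eq_zero_or_payoff_one_eq_zero (g : PureProfile subgame₃) :
    payoff g 0 = 0 ∨ payoff g 1 = 0 := by
  cases g with | node ch sub =>
  fin_cases ch
  · right; erw [payoff_node, payoff_leaf]; rfl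
  · left; erw [payoff_node, payoff_leaf]; rfl

theorem payoff_zero_le_two_of_isSPE (g : PureProfile subgame₂) (hg : IsSPE g) :
    payoff g 0 ≤ 2 := by
  cases g with | node ch sub =>
  fin_cases ch
  · rcases payoff_zero_eq_zero_or_payoff_one_eq_zero (sub 0) with h | h
    · exact h.le.trans zero_le_two
    · have h₁ : payoff (sub 1) 1 ≤ payoff (sub 0) 1 := hg.payoff_le_of_mover 1
      erw [payoff_leaf, h] at h₁
      norm_num at h₁
  · erw [payoff_node, payoff_leaf]; norm_num

theorem not_isSPE_of_inSupport (g : PureProfile G5) (hg : InSupport f g) : ¬ IsSPE g := by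
  intro hspe
  cases g with | node ch sub =>
  fin_cases ch
  · have h₀ : payoff (sub 0) 0 ≤ 2 := payoff_zero_le_two_of_isSPE (sub 0) (hspe.1 0)
    have h₁ : payoff (sub 1) 0 ≤ payoff (sub 0) 0 := hspe.payoff_le_of_mover 1
    erw [payoff_leaf] at h₁
    norm_num at h₁
    linarith
  · exact absurd hg.1 (by norm_num)

theorem fixedSum_nine : FixedSum G5 9 := by
  simp [G5, fixedSum_node_iff, fixedSum_leaf_iff, Fin.forall_fin_two, Fin.sum_univ_three]
  norm_num

end G5

theorem stmt9 :
    FixedSum G5 9 ∧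
      ∃ f : MixedProfile G5, MixedSPE f ∧
        ∀ g : PureProfile G5, InSupport f g → ¬ IsSPE g :=
  ⟨G5.fixedSum_nine, G5.f, G5.mixedSPE_f, G5.not_isSPE_of_inSupport⟩
end
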